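/- Let Y ∈ F_q^{r×(n+b)} be a fixed matrix, X_0 ∈ F_q^{b×(n+b)} a fixed matrix in the row space of Y (X_0 = X^s Y for some X^s). Choose t elements r_1,...,r_t i.i.d. uniform on F_q and set D ∈ F_q^{(n+b)×t} with D_{k,j} = r_j^k, H = X_0 D. Then the probability that there exists V ∈ F_q^{b×r} with V Y ≠ X_0 but V Y D = H is at most q^{br} · ((n+b)/q)^t. -/

import Mathlib

/-!
If `V Y ≠ X₀`, some row `c` of `V Y - X₀` is nonzero, and `(V Y - X₀) D = 0` forces every
evaluation point `r_j` to be a root of the nonzero polynomial `∑ₖ c_k X^(k+1)` of degree at most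
`n + b`. So for a fixed `V` at most `(n + b)^t` of the `q^t` point tuples are bad, and a union
bound over the `q^(br)` matrices `V` gives the claim.
-/

section

open Polynomial Finset

variable {F : Type*} [Field F]

def powerHash (m : ℕ) {t : ℕ} (ρ : Fin t → F) : Matrix (Fin m) (Fin t) F :=
  Matrix.of fun k j => ρ j ^ ((k : ℕ) + 1)

lemma sum_C_mul_X_pow_succ_ne_zero {m : ℕ} {c : Fin m → F} (hc : c ≠ 0) :
    ∑ k : Fin m, C (c k) * X ^ ((k : ℕ) + 1) ≠ 0 := by
  obtain ⟨k₀, hk₀⟩ := Function.ne_iff.mp hc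
  intro h
  have hcoeff := congrArg (coeff · ((k₀ : ℕ) + 1)) h
  simp only [finsetSum_coeff, coeff_C_mul_X_pow, add_left_inj, Fin.val_inj, coeff_zero,
    Finset.sum_ite_eq, Finset.mem_univ, if_true] at hcoeff
  exact hk₀ hcoeff

lemma natDegree_sum_C_mul_X_pow_succ_le {m : ℕ} (c : Fin m → F) :
    (∑ k : Fin m, C (c k) * X ^ ((k : ℕ) + 1)).natDegree ≤ m :=
  natDegree_sum_le_of_forall_le _ _ fun k _ => (natDegree_C_mul_X_pow_le _ _).trans k.2

lemma card_filter_sum_mul_pow_succ_eq_zero_le [Fintype F] [DecidableEq F] {m : ℕ}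
    {c : Fin m → F} (hc : c ≠ 0) :
    #{x : F | ∑ k : Fin m, c k * x ^ ((k : ℕ) + 1) = 0} ≤ m := by
  set p : F[X] := ∑ k : Fin m, C (c k) * X ^ ((k : ℕ) + 1)
  have hp : p ≠ 0 := sum_C_mul_X_pow_succ_ne_zero hc
  refine le_trans (card_le_degree_of_subset_roots fun x hx => ?_)
    (natDegree_sum_C_mul_X_pow_succ_le c)
  simpa [mem_roots hp, p, eval_finsetSum] using hx

lemma card_filter_mul_powerHash_eq_zero_le [Fintype F] [DecidableEq F] {ι : Type*} [Fintype ι]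
    {m : ℕ} (t : ℕ) {M : Matrix ι (Fin m) F} (hM : M ≠ 0) :
    #{ρ : Fin t → F | M * powerHash m ρ = 0} ≤ m ^ t := by
  obtain ⟨i, hi⟩ : ∃ i, M i ≠ 0 := by
    by_contra! h
    exact hM (funext h)
  set S : Finset F := {x | ∑ k : Fin m, M i k * x ^ ((k : ℕ) + 1) = 0}
  have hsub : ({ρ : Fin t → F | M * powerHash m ρ = 0} : Finset _) ⊆
      Fintype.piFinset fun _ => S := by
    intro ρ hρ
    simp only [mem_filter, mem_univ, true_and] at hρ
    simpa [S, Matrix.mul_apply, powerHash] using fun j => congrFun (congrFun hρ i) j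
  calc _ ≤ (Fintype.piFinset fun _ : Fin t => S).card := card_le_card hsub
    _ = #S ^ t := by simp
    _ ≤ m ^ t := Nat.pow_le_pow_left (card_filter_sum_mul_pow_succ_eq_zero_le hi) t

lemma card_filter_exists_mul_powerHash_eq_le [Fintype F] [DecidableEq F]
    {ι κ : Type*} [Fintype ι] [DecidableEq ι] [Fintype κ] [DecidableEq κ] {m : ℕ} (t : ℕ)
    (Y : Matrix κ (Fin m) F) (X₀ : Matrix ι (Fin m) F) :
    #{ρ : Fin t → F | ∃ V : Matrix ι κ F, V * Y ≠ X₀ ∧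
        V * Y * powerHash m ρ = X₀ * powerHash m ρ}
      ≤ Fintype.card F ^ (Fintype.card ι * Fintype.card κ) * m ^ t := by
  have hsub : ({ρ : Fin t → F | ∃ V : Matrix ι κ F, V * Y ≠ X₀ ∧
        V * Y * powerHash m ρ = X₀ * powerHash m ρ} : Finset _) ⊆
      univ.biUnion fun V : Matrix ι κ F =>
        {ρ : Fin t → F | V * Y ≠ X₀ ∧ (V * Y - X₀) * powerHash m ρ = 0} := by
    intro ρ hρ
    obtain ⟨V, hV, hρV⟩ := (mem_filter.mp hρ).2
    exact mem_biUnion.mpr ⟨V, mem_univ _, by simp [hV, Matrix.sub_mul, hρV]⟩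
  have hcard :
      Fintype.card (Matrix ι κ F) = Fintype.card F ^ (Fintype.card ι * Fintype.card κ) := by
    rw [Fintype.card_congr Matrix.of.symm]
    simp only [Fintype.card_fun, ← pow_mul, mul_comm]
  refine (card_le_card hsub).trans <| hcard ▸ card_biUnion_le_card_mul _ _ (m ^ t) fun V _ => ?_
  by_cases hV : V * Y = X₀
  · simp [hV]
  · simpa [hV] using card_filter_mul_powerHash_eq_zero_le t (sub_ne_zero.mpr hV)

end

open scoped Classical in
theorem stmt_16_general (q r n b t : ℕ) (F : Type*) [Field F] [Fintype F] [DecidableEq F]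
    (hq : Fintype.card F = q)
    (Y : Matrix (Fin r) (Fin (n + b)) F)
    (X₀ : Matrix (Fin b) (Fin (n + b)) F) :
    ((Finset.univ.filter (fun ρ : Fin t → F =>
        ∃ V : Matrix (Fin b) (Fin r) F, V * Y ≠ X₀ ∧
          V * Y * (Matrix.of fun (k : Fin (n + b)) (j : Fin t) => (ρ j) ^ ((k : ℕ) + 1))
            = X₀ * (Matrix.of fun (k : Fin (n + b)) (j : Fin t) =>
                (ρ j) ^ ((k : ℕ) + 1)))).card : ℝ)
        / (Fintype.card (Fin t → F))
      ≤ (q : ℝ) ^ (b * r) * (((n + b : ℕ) : ℝ) / q) ^ t := by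
  have hq_pos : (0 : ℝ) < q := by exact_mod_cast hq ▸ Fintype.card_pos
  have hbad := card_filter_exists_mul_powerHash_eq_le t Y X₀
  simp only [Fintype.card_fin, hq] at hbad
  rw [Fintype.card_fun, Fintype.card_fin, hq, Nat.cast_pow,
    div_le_iff₀ (pow_pos hq_pos t), div_pow, mul_assoc,
    div_mul_cancel₀ _ (pow_ne_zero t hq_pos.ne')]
  exact_mod_cast hbad

open scoped Classical in
/-- For fixed `Y` and `X_0 = X^s Y`, with a random Vandermonde hash matrix
`D` built from `t` i.i.d. uniform points and `H = X_0 D`, the probability that some `V`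
with `V Y ≠ X_0` satisfies `V Y D = H` is at most `q^{br} ((n+b)/q)^t`. -/
theorem stmt_16 (q r n b t : ℕ) (F : Type*) [Field F] [Fintype F] [DecidableEq F]
    (hq : Fintype.card F = q)
    (Y : Matrix (Fin r) (Fin (n + b)) F)
    (Xs : Matrix (Fin b) (Fin r) F) (X₀ : Matrix (Fin b) (Fin (n + b)) F)
    (hX₀ : X₀ = Xs * Y) :
    ((Finset.univ.filter (fun ρ : Fin t → F =>
        ∃ V : Matrix (Fin b) (Fin r) F, V * Y ≠ X₀ ∧
          V * Y * (Matrix.of fun (k : Fin (n + b)) (j : Fin t) => (ρ j) ^ ((k : ℕ) + 1))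
            = X₀ * (Matrix.of fun (k : Fin (n + b)) (j : Fin t) =>
                (ρ j) ^ ((k : ℕ) + 1)))).card : ℝ)
        / (Fintype.card (Fin t → F))
      ≤ (q : ℝ) ^ (b * r) * (((n + b : ℕ) : ℝ) / q) ^ t :=
  stmt_16_general q r n b t F hq Y X₀
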